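/- Fix n ≥ 1 and let J : ℝⁿ × ℝⁿ → ℝⁿ × ℝⁿ be the standard linear complex structure J(x,y) = (−y, x). Let H : (ℝⁿ × ℝⁿ) × ℝ → ℝ be smooth and 1-periodic in its last argument, let F : ℝⁿ × ℝⁿ → ℝ be smooth, let α ≥ 0, and let v : ℝ → ℝⁿ × ℝⁿ be a smooth 1-periodic loop which is spacelike, i.e. 1 + α·(d/dt)(F(v(t))) > 0 for all t, so that τ_v(t) = t + αF(v(t)) is a strictly increasing bijection of ℝ with smooth inverse σ_v. Define the action A_α(v) = (1/2)∫₀¹ ⟨J v(t), v'(t)⟩ dt − ∫₀¹ H(v(t + αF(v(t))), t + αF(v(t))) dt. If v is a critical point of A_α, meaning (d/ds)|_{s=0} A_α(v + sη) = 0 for every smooth 1-periodic η : ℝ → ℝⁿ × ℝⁿ, then v solves the delay equation v'(t) = σ_v'(t)·J∇ₓH(v(t), t) + α·[⟨∇ₓH(v(τ_v(t)), τ_v(t)), v'(τ_v(t))⟩ + ∂_t H(v(τ_v(t)), τ_v(t))]·J∇F(v(t)) for all t, where ∇ₓ denotes the gradient in the ℝⁿ × ℝⁿ variable and ∂_t the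 partial derivative in the time variable. -/

import Mathlib

set_option maxHeartbeats 1000000
set_option synthInstance.maxHeartbeats 400000

open intervalIntegral Set MeasureTheory InnerProductSpace

/-- The phase space `ℝⁿ × ℝⁿ` with its standard (L²) inner ℝ product. -/
noncomputable abbrev Phase (n : ℕ) : Type :=
  WithLp 2 (EuclideanSpace ℝ (Fin n) × EuclideanSpace ℝ (Fin n))

/-- The standard linear complex structure `J(x,y) = (-y, x)`. -/
noncomputable def Jstd (n : ℕ) (p : Phase n) : Phase n :=
  WithLp.toLp 2 (-(WithLp.ofLp p).2, (WithLp.ofLp p).1)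

/-- The nonautonomous retarded Hamiltonian action functional
`A_α(w) = (1/2)∫₀¹ ⟨J w(t), w'(t)⟩ dt − ∫₀¹ H(w(t + αF(w(t))), t + αF(w(t))) dt`. -/
noncomputable def actionNA (n : ℕ) (α : ℝ) (H : Phase n × ℝ → ℝ) (F : Phase n → ℝ)
    (w : ℝ → Phase n) : ℝ :=
  (1 / 2) * (∫ t in (0:ℝ)..1, (inner ℝ (Jstd n (w t)) (deriv w t) : ℝ)) -
    ∫ t in (0:ℝ)..1, H (w (t + α * F (w t)), t + α * F (w t))

section Aux

instance phaseContinuousSMul (n : ℕ) : ContinuousSMul ℝ (Phase n) := IsBoundedSMul.continuousSMul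

theorem Jstd_fst {n : ℕ} (p : Phase n) : (WithLp.ofLp (Jstd n p)).1 = -(WithLp.ofLp p).2 := rfl
theorem Jstd_snd {n : ℕ} (p : Phase n) : (WithLp.ofLp (Jstd n p)).2 = (WithLp.ofLp p).1 := rfl

/-- `Jstd` as a linear map. -/
noncomputable def JLlin (n : ℕ) : Phase n →ₗ[ℝ] Phase n where
  toFun := Jstd n
  map_add' a b := by
    apply WithLp.ofLp_injective
    apply Prod.ext <;>
      simp [Jstd, Jstd_fst, Jstd_snd, WithLp.add_fst, WithLp.add_snd, WithLp.neg_fst, WithLp.neg_snd] <;>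
      abel
  map_smul' c a := by
    apply WithLp.ofLp_injective
    apply Prod.ext <;>
      simp [Jstd, Jstd_fst, Jstd_snd, WithLp.smul_fst, WithLp.smul_snd, WithLp.neg_fst, WithLp.neg_snd]

/-- `Jstd` as a continuous linear map. -/
noncomputable def JL (n : ℕ) : Phase n →L[ℝ] Phase n := (JLlin n).toContinuousLinearMap

theorem J_J {n : ℕ} (a : Phase n) : Jstd n (Jstd n a) = -a := by
  apply WithLp.ofLp_injective
  apply Prod.ext <;> simp [Jstd, Jstd_fst, Jstd_snd, WithLp.neg_fst, WithLp.neg_snd]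

theorem J_anti {n : ℕ} (a b : Phase n) : (inner ℝ (Jstd n a) b : ℝ) = - inner ℝ a (Jstd n b) := by
  simp only [Jstd, WithLp.prod_inner_apply]
  show (inner ℝ (-(WithLp.ofLp a).2) (WithLp.ofLp b).1 : ℝ) + inner ℝ (WithLp.ofLp a).1 (WithLp.ofLp b).2 =
    -((inner ℝ (WithLp.ofLp a).1 (-(WithLp.ofLp b).2) : ℝ) + inner ℝ (WithLp.ofLp a).2 (WithLp.ofLp b).1)
  simp [inner_neg_left, inner_neg_right, real_inner_comm]

variable {E : Type*} [NormedAddCommGroup E] [InnerProductSpace ℝ E] [CompleteSpace E]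

/-- `toDual.symm` as a real continuous linear map. -/
noncomputable def gradCLM (E : Type*) [NormedAddCommGroup E] [InnerProductSpace ℝ E]
    [CompleteSpace E] : (E →L[ℝ] ℝ) →L[ℝ] E where
  toFun := (toDual ℝ E).symm
  map_add' a b := by simp
  map_smul' c a := by simp [map_smulₛₗ]
  cont := (toDual ℝ E).symm.continuous

theorem gradient_eq_gradCLM (f : E → ℝ) (x : E) :
    gradient f x = gradCLM E (fderiv ℝ f x) := rfl

theorem grad_inner' (f : E → ℝ) (x y : E) :
    (inner ℝ (gradient f x) y : ℝ) = fderiv ℝ f x y := by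
  rw [gradient]
  exact InnerProductSpace.toDual_symm_apply

/-- Derivative at `0` of a quadratic polynomial. -/
theorem poly_hasDerivAt (A B C : ℝ) :
    HasDerivAt (fun s : ℝ => A + s * B + s ^ 2 * C) B 0 := by
  have h : HasDerivAt (fun s : ℝ => A + s * B + s ^ 2 * C)
      (0 + 1 * B + (2 * 0 ^ 1) * C) 0 :=
    ((hasDerivAt_const 0 A).add ((hasDerivAt_id 0).mul_const B)).add
      ((hasDerivAt_pow 2 0).mul_const C)
  simpa using h

/-- Differentiation under the interval integral for `C¹` integrands. -/
theorem param_hasDerivAt {G : ℝ × ℝ → ℝ} (hG : ContDiff ℝ 1 G) :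
    HasDerivAt (fun s => ∫ t in (0:ℝ)..1, G (s, t))
      (∫ t in (0:ℝ)..1, fderiv ℝ G (0, t) (1, 0)) 0 := by
  have hGc : Continuous G := hG.continuous
  set D : ℝ → ℝ → ℝ := fun s t => fderiv ℝ G (s, t) (1, 0) with hD
  have hDc : Continuous fun p : ℝ × ℝ => fderiv ℝ G p (1, 0) :=
    (ContinuousLinearMap.apply ℝ ℝ ((1:ℝ), (0:ℝ))).continuous.comp
      (hG.continuous_fderiv one_ne_zero)
  have hDd : ∀ (s t : ℝ), HasDerivAt (fun s' => G (s', t)) (D s t) s := by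
    intro s t
    have h1 : HasDerivAt (fun s' : ℝ => (s', t)) ((1:ℝ), (0:ℝ)) s :=
      (hasDerivAt_id s).prodMk (hasDerivAt_const s t)
    exact ((hG.differentiable one_ne_zero) (s, t)).hasFDerivAt.comp_hasDerivAt s h1
  obtain ⟨C, hC⟩ : ∃ C, ∀ p ∈ (Icc (-1:ℝ) 1 ×ˢ Icc (0:ℝ) 1),
      ‖fderiv ℝ G p (1, 0)‖ ≤ C :=
    ((isCompact_Icc.prod isCompact_Icc)).exists_bound_of_continuousOn hDc.continuousOn
  refine (intervalIntegral.hasDerivAt_integral_of_dominated_loc_of_deriv_le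
    (μ := MeasureTheory.volume) (F := fun s t => G (s, t)) (F' := D) (x₀ := (0:ℝ)) (a := 0)
    (b := 1) (bound := fun _ => C) (s := Metric.ball 0 1) (Metric.ball_mem_nhds 0 one_pos) ?_ ?_ ?_ ?_ ?_ ?_).2
  · filter_upwards with x
    exact (hGc.comp (continuous_const.prodMk continuous_id)).aestronglyMeasurable.restrict
  · exact (hGc.comp (continuous_const.prodMk continuous_id)).intervalIntegrable 0 1
  · exact (hDc.comp (continuous_const.prodMk continuous_id)).aestronglyMeasurable.restrict
  · filter_upwards with t ht x hx
    have hx' : |x| ≤ 1 := by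
      have := Metric.mem_ball.mp hx
      rw [Real.dist_eq, sub_zero] at this
      exact this.le
    have ht' : t ∈ Icc (0:ℝ) 1 := by
      have h : Set.uIoc (0:ℝ) 1 = Ioc 0 1 := uIoc_of_le zero_le_one
      rw [h] at ht
      exact ⟨ht.1.le, ht.2⟩
    exact hC (x, t) ⟨abs_le.mp hx', ht'⟩
  · exact intervalIntegrable_const
  · filter_upwards with t ht x hx
    exact hDd x t

/-- A continuous nonnegative function on `[0,1]` with zero integral vanishes. -/
theorem eq_zero_of_integral_nonneg (f : ℝ → ℝ) (hf : Continuous f) (hnn : ∀ t, 0 ≤ f t)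
    (h0 : ∫ t in (0:ℝ)..1, f t = 0) : ∀ t ∈ Icc (0:ℝ) 1, f t = 0 := by
  have hIoo : ∀ t ∈ Ioo (0:ℝ) 1, f t = 0 := by
    by_contra hcon
    push_neg at hcon
    obtain ⟨t₀, ht₀, hft₀⟩ := hcon
    have hpos : 0 < f t₀ := lt_of_le_of_ne (hnn t₀) (Ne.symm hft₀)
    obtain ⟨δ, hδ, hball⟩ := Metric.continuousAt_iff.mp hf.continuousAt (f t₀ / 2) (by linarith)
    set ε : ℝ := min δ (min t₀ (1 - t₀)) with hε
    have hεpos : 0 < ε := lt_min hδ (lt_min ht₀.1 (by linarith [ht₀.2]))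
    have hεδ : ε ≤ δ := min_le_left _ _
    have hεt : ε ≤ t₀ := le_trans (min_le_right _ _) (min_le_left _ _)
    have hε1 : ε ≤ 1 - t₀ := le_trans (min_le_right _ _) (min_le_right _ _)
    have hfpos : ∀ x ∈ Ioo (t₀ - ε) (t₀ + ε), 0 < f x := by
      intro x hx
      have hdist : dist x t₀ < δ := by
        rw [Real.dist_eq, abs_lt]
        constructor <;> [linarith [hx.1, hεδ]; linarith [hx.2, hεδ]]
      have h2 := hball hdist
      rw [Real.dist_eq, abs_lt] at h2
      linarith [h2.1]
    have hint : ∀ a b : ℝ, IntervalIntegrable f volume a b := fun a b =>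
      hf.intervalIntegrable a b
    have hmid : 0 < ∫ t in (t₀ - ε)..(t₀ + ε), f t :=
      intervalIntegral.intervalIntegral_pos_of_pos_on (hint _ _) hfpos (by linarith)
    have hsplit : ∫ t in (0:ℝ)..1, f t =
        (∫ t in (0:ℝ)..(t₀ - ε), f t) + (∫ t in (t₀ - ε)..(t₀ + ε), f t)
          + ∫ t in (t₀ + ε)..1, f t := by
      rw [intervalIntegral.integral_add_adjacent_intervals (hint _ _) (hint _ _),
        intervalIntegral.integral_add_adjacent_intervals (hint _ _) (hint _ _)]
    have h1 : 0 ≤ ∫ t in (0:ℝ)..(t₀ - ε), f t :=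
      intervalIntegral.integral_nonneg (by linarith) (fun u _ => hnn u)
    have h2 : 0 ≤ ∫ t in (t₀ + ε)..1, f t :=
      intervalIntegral.integral_nonneg (by linarith [ht₀.2, hε1]) (fun u _ => hnn u)
    rw [hsplit] at h0
    linarith
  intro t ht
  have hcl : Icc (0:ℝ) 1 = closure (Ioo (0:ℝ) 1) := (closure_Ioo one_ne_zero.symm).symm
  have heqon : EqOn f 0 (Ioo (0:ℝ) 1) := fun u hu => hIoo u hu
  have hcls : EqOn f 0 (closure (Ioo (0:ℝ) 1)) := heqon.closure hf continuous_const
  exact hcls (hcl ▸ ht)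

end Aux

/-- Proposition `del2` of the paper on `(ℝ²ⁿ, ω₀)`, the nonautonomous
case: a spacelike critical point `v` of the retarded action `A_α` solves the delay
equation
`v'(t) = σ_v'(t)·J∇ₓH(v(t),t)
  + α·[⟨∇ₓH(v(τ_v(t)),τ_v(t)), v'(τ_v(t))⟩ + ∂ₜH(v(τ_v(t)),τ_v(t))]·J∇F(v(t))`,
where `τ_v(t) = t + αF(v(t))` and `σ_v` is its inverse. -/
theorem statement3 (n : ℕ) (hn : 1 ≤ n) (H : Phase n × ℝ → ℝ) (F : Phase n → ℝ)
    (hH : ContDiff ℝ (⊤ : ℕ∞) H) (hHper : ∀ (x : Phase n) (t : ℝ), H (x, t + 1) = H (x, t))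
    (hF : ContDiff ℝ (⊤ : ℕ∞) F) (α : ℝ) (hα : 0 ≤ α)
    (v : ℝ → Phase n) (hv : ContDiff ℝ (⊤ : ℕ∞) v) (hvper : ∀ t : ℝ, v (t + 1) = v t)
    (hspace : ∀ t : ℝ, 0 < 1 + α * deriv (fun s => F (v s)) t)
    (σ : ℝ → ℝ) (hσ : ContDiff ℝ (⊤ : ℕ∞) σ)
    (hσleft : ∀ t : ℝ, σ (t + α * F (v t)) = t)
    (hσright : ∀ t : ℝ, σ t + α * F (v (σ t)) = t)
    (hcrit : ∀ η : ℝ → Phase n, ContDiff ℝ (⊤ : ℕ∞) η → (∀ t : ℝ, η (t + 1) = η t) →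
      HasDerivAt (fun s : ℝ => actionNA n α H F (fun t => v t + s • η t)) 0 0) :
    ∀ t : ℝ, deriv v t =
      deriv σ t • Jstd n (gradient (fun x => H (x, t)) (v t)) +
        (α * ((inner ℝ (gradient (fun x => H (x, t + α * F (v t))) (v (t + α * F (v t))))
                (deriv v (t + α * F (v t))) : ℝ) +
              deriv (fun s => H (v (t + α * F (v t)), s)) (t + α * F (v t)))) •
          Jstd n (gradient F (v t)) := by
  classical
  -- basic notation
  set τ : ℝ → ℝ := fun t => t + α * F (v t) with hτdef
  set ρ : ℝ → ℝ := fun t => 1 + α * deriv (fun s => F (v s)) t with hρdef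
  set Gx : ℝ → Phase n := fun u => gradient (fun x => H (x, u)) (v u) with hGxdef
  set GF : ℝ → Phase n := fun u => gradient F (v u) with hGFdef
  set pt : ℝ → ℝ := fun u => deriv (fun s => H (v u, s)) u with hptdef
  set Kx : ℝ → ℝ := fun u => (inner ℝ (Gx u) (deriv v u) : ℝ) + pt u with hKxdef
  set W : ℝ → Phase n :=
    fun u => Jstd n (deriv v u) + deriv σ u • Gx u + (α * Kx (τ u)) • GF u with hWdef
  -- basic calculus facts
  have hvd : ∀ t, HasDerivAt v (deriv v t) t := fun t =>
    ((hv.differentiable (by simp)) t).hasDerivAt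
  have hv'C : ContDiff ℝ (⊤ : ℕ∞) (deriv v) := by
    rw [show ((⊤ : ℕ∞) : WithTop ℕ∞) = ((⊤ : ℕ∞) : WithTop ℕ∞) + 1 from rfl] at hv
    exact (contDiff_succ_iff_deriv.mp hv).2.2
  have hσd : ∀ t, HasDerivAt σ (deriv σ t) t := fun t =>
    ((hσ.differentiable (by simp)) t).hasDerivAt
  have hσ'C : ContDiff ℝ (⊤ : ℕ∞) (deriv σ) := by
    rw [show ((⊤ : ℕ∞) : WithTop ℕ∞) = ((⊤ : ℕ∞) : WithTop ℕ∞) + 1 from rfl] at hσ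
    exact (contDiff_succ_iff_deriv.mp hσ).2.2
  have hFvC : ContDiff ℝ (⊤ : ℕ∞) (fun t => F (v t)) := hF.comp hv
  have hFvd : ∀ t, HasDerivAt (fun s => F (v s)) (deriv (fun s => F (v s)) t) t := fun t =>
    ((hFvC.differentiable (by simp)) t).hasDerivAt
  have hτd : ∀ t, HasDerivAt τ (ρ t) t := by
    intro t
    exact (hasDerivAt_id t).add ((hFvd t).const_mul α)
  have hτC : ContDiff ℝ (⊤ : ℕ∞) τ := contDiff_id.add (contDiff_const.mul hFvC)
  have hρpos : ∀ t, 0 < ρ t := hspace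
  have hρC : ContDiff ℝ (⊤ : ℕ∞) ρ := by
    have : ContDiff ℝ (⊤ : ℕ∞) (deriv (fun s => F (v s))) := by
      rw [show ((⊤ : ℕ∞) : WithTop ℕ∞) = ((⊤ : ℕ∞) : WithTop ℕ∞) + 1 from rfl] at hFvC
      exact (contDiff_succ_iff_deriv.mp hFvC).2.2
    exact contDiff_const.add (contDiff_const.mul this)
  have hτmono : StrictMono τ := by
    apply strictMono_of_deriv_pos
    intro t
    rw [(hτd t).deriv]
    exact hρpos t
  have hτper : ∀ t, τ (t + 1) = τ t + 1 := by
    intro t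
    simp only [hτdef, hvper t]
    ring
  have hτσ : ∀ u, τ (σ u) = u := fun u => hσright u
  have hinv : ∀ t, deriv σ (τ t) * ρ t = 1 := by
    intro t
    have h1 : HasDerivAt (fun u => σ (τ u)) (deriv σ (τ t) * ρ t) t :=
      (hσd (τ t)).comp t (hτd t)
    have h2 : (fun u => σ (τ u)) = fun u => u := funext fun u => hσleft u
    rw [h2] at h1
    exact h1.unique (hasDerivAt_id t)
  have hσper : ∀ t, σ (t + 1) = σ t + 1 := by
    intro t
    apply hτmono.injective
    rw [hτσ (t + 1), hτper (σ t), hτσ t]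
  have hσ'per : ∀ t, deriv σ (t + 1) = deriv σ t := by
    intro t
    have h1 : deriv (fun x => σ (x + 1)) t = deriv σ (t + 1) := deriv_comp_add_const σ 1 t
    have h2 : (fun x => σ (x + 1)) = fun x => σ x + 1 := funext fun x => hσper x
    rw [h2] at h1
    rw [← h1, deriv_add_const]
  have hv'per : ∀ t, deriv v (t + 1) = deriv v t := by
    intro t
    have h1 : deriv (fun x => v (x + 1)) t = deriv v (t + 1) := deriv_comp_add_const v 1 t
    have h2 : (fun x => v (x + 1)) = v := funext fun x => hvper x
    rw [h2] at h1
    exact h1.symm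
  -- partial derivatives of H
  have hHdiff : Differentiable ℝ H := hH.differentiable (by simp)
  have hpartx : ∀ (x : Phase n) (t : ℝ), HasFDerivAt (fun y => H (y, t))
      ((fderiv ℝ H (x, t)).comp (ContinuousLinearMap.inl ℝ (Phase n) ℝ)) x := fun x t =>
    ((hHdiff (x, t)).hasFDerivAt).comp x (hasFDerivAt_prodMk_left x t)
  have hpairx : ∀ (x : Phase n) (t : ℝ) (ξ : Phase n),
      (inner ℝ (gradient (fun y => H (y, t)) x) ξ : ℝ) = fderiv ℝ H (x, t) (ξ, 0) := by
    intro x t ξ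
    rw [grad_inner', (hpartx x t).fderiv]
    rfl
  have hpartt : ∀ (x : Phase n) (t : ℝ),
      HasDerivAt (fun s => H (x, s)) (fderiv ℝ H (x, t) (0, 1)) t := fun x t =>
    ((hHdiff (x, t)).hasFDerivAt).comp_hasDerivAt t
      ((hasDerivAt_const t x).prodMk (hasDerivAt_id t))
  have hderivt : ∀ (x : Phase n) (t : ℝ),
      deriv (fun s => H (x, s)) t = fderiv ℝ H (x, t) (0, 1) := fun x t => (hpartt x t).deriv
  have hpairF : ∀ (x : Phase n) (ξ : Phase n),
      (inner ℝ (gradient F x) ξ : ℝ) = fderiv ℝ F x ξ := fun x ξ => grad_inner' F x ξ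
  -- periodicity of the coefficient functions
  have hHfun : ∀ t : ℝ, (fun x : Phase n => H (x, t + 1)) = fun x => H (x, t) := fun t =>
    funext fun x => hHper x t
  have hGxper : ∀ t, Gx (t + 1) = Gx t := by
    intro t
    simp only [hGxdef, hvper t, hHfun t]
  have hGFper : ∀ t, GF (t + 1) = GF t := by
    intro t
    simp only [hGFdef, hvper t]
  have hptper : ∀ t, pt (t + 1) = pt t := by
    intro t
    have h1 := deriv_comp_add_const (fun s => H (v t, s)) 1 t
    have h2 : (fun x => H (v t, x + 1)) = fun x => H (v t, x) := funext fun x => hHper _ x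
    simp only [hptdef, hvper t]
    rw [← h1, h2]
  have hKxper : ∀ t, Kx (t + 1) = Kx t := by
    intro t
    simp only [hKxdef, hGxper t, hptper t, hv'per t]
  have hWper : ∀ t, W (t + 1) = W t := by
    intro t
    simp only [hWdef, hv'per t, hσ'per t, hGxper t, hGFper t, hτper t, hKxper (τ t)]
  -- smoothness of the coefficient functions
  have hfdHC : ContDiff ℝ (⊤ : ℕ∞) (fun u : ℝ => fderiv ℝ H (v u, u)) :=
    (hH.fderiv_right le_rfl).comp (hv.prodMk contDiff_id)
  have hcompC : ContDiff ℝ (⊤ : ℕ∞)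
      (fun u : ℝ => (fderiv ℝ H (v u, u)).comp (ContinuousLinearMap.inl ℝ (Phase n) ℝ)) := by
    have := (contDiff_const (c := (ContinuousLinearMap.compL ℝ (Phase n) (Phase n × ℝ)
      ℝ).flip (ContinuousLinearMap.inl ℝ (Phase n) ℝ)) (n := ((⊤ : ℕ∞) : WithTop ℕ∞))).clm_apply hfdHC
    exact this
  have hGxC : ContDiff ℝ (⊤ : ℕ∞) Gx := by
    have heq : Gx = fun u => gradCLM (Phase n)
        ((fderiv ℝ H (v u, u)).comp (ContinuousLinearMap.inl ℝ (Phase n) ℝ)) := by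
      funext u
      show gradient (fun x => H (x, u)) (v u) = _
      rw [gradient_eq_gradCLM, (hpartx (v u) u).fderiv]
    rw [heq]
    exact contDiff_const.clm_apply hcompC
  have hGFC : ContDiff ℝ (⊤ : ℕ∞) GF := by
    have heq : GF = fun u => gradCLM (Phase n) (fderiv ℝ F (v u)) := rfl
    rw [heq]
    exact contDiff_const.clm_apply ((hF.fderiv_right le_rfl).comp hv)
  have hptC : ContDiff ℝ (⊤ : ℕ∞) pt := by
    have heq : pt = fun u => fderiv ℝ H (v u, u) (0, 1) := funext fun u => hderivt (v u) u
    rw [heq]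
    exact hfdHC.clm_apply contDiff_const
  have hKxC : ContDiff ℝ (⊤ : ℕ∞) Kx := (hGxC.inner ℝ hv'C).add hptC
  have hWC : ContDiff ℝ (⊤ : ℕ∞) W := by
    have heq : W = fun u => JL n (deriv v u) + deriv σ u • Gx u + (α * Kx (τ u)) • GF u := rfl
    rw [heq]
    exact (((JL n).contDiff.comp hv'C).add (hσ'C.smul hGxC)).add
      ((contDiff_const.mul (hKxC.comp hτC)).smul hGFC)
  -- the first-variation identity
  have hvar : ∀ η : ℝ → Phase n, ContDiff ℝ (⊤ : ℕ∞) η → (∀ t : ℝ, η (t + 1) = η t) →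
      ∫ t in (0:ℝ)..1, (inner ℝ (W t) (η t) : ℝ) = 0 := by
    intro η hη hηper
    have hηd : ∀ t, HasDerivAt η (deriv η t) t := fun t =>
      ((hη.differentiable (by simp)) t).hasDerivAt
    have hη'C : ContDiff ℝ (⊤ : ℕ∞) (deriv η) := by
      have hη2 := hη
      rw [show ((⊤ : ℕ∞) : WithTop ℕ∞) = ((⊤ : ℕ∞) : WithTop ℕ∞) + 1 from rfl] at hη2
      exact (contDiff_succ_iff_deriv.mp hη2).2.2
    -- the two parametric integrands
    set g : ℝ × ℝ → ℝ := fun p =>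
      (inner ℝ (Jstd n (v p.2 + p.1 • η p.2)) (deriv v p.2 + p.1 • deriv η p.2) : ℝ) with hgdef
    set c : ℝ × ℝ → ℝ := fun p => p.2 + α * F (v p.2 + p.1 • η p.2) with hcdef
    set G : ℝ × ℝ → ℝ := fun p => H (v (c p) + p.1 • η (c p), c p) with hGdef
    -- rewriting the action as parametric integrals
    have hact : (fun s : ℝ => actionNA n α H F (fun t => v t + s • η t)) =
        fun s => (1 / 2) * (∫ t in (0:ℝ)..1, g (s, t)) - ∫ t in (0:ℝ)..1, G (s, t) := by
      funext s
      unfold actionNA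
      congr 1
      · congr 1
        apply intervalIntegral.integral_congr
        intro t _
        have hd : deriv (fun t => v t + s • η t) t = deriv v t + s • deriv η t :=
          ((hvd t).add ((hηd t).const_smul s)).deriv
        show (inner ℝ (Jstd n (v t + s • η t)) (deriv (fun t => v t + s • η t) t) : ℝ) = g (s, t)
        rw [hd]
    -- joint smoothness
    have hvsnd : ContDiff ℝ (⊤ : ℕ∞) (fun p : ℝ × ℝ => v p.2 + p.1 • η p.2) :=
      (hv.comp contDiff_snd).add (contDiff_fst.smul (hη.comp contDiff_snd))
    have hgC : ContDiff ℝ (⊤ : ℕ∞) g := by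
      have h1 : ContDiff ℝ (⊤ : ℕ∞) (fun p : ℝ × ℝ => JL n (v p.2 + p.1 • η p.2)) :=
        (JL n).contDiff.comp hvsnd
      have h2 : ContDiff ℝ (⊤ : ℕ∞) (fun p : ℝ × ℝ => deriv v p.2 + p.1 • deriv η p.2) :=
        (hv'C.comp contDiff_snd).add (contDiff_fst.smul (hη'C.comp contDiff_snd))
      exact h1.inner ℝ h2
    have hcC : ContDiff ℝ (⊤ : ℕ∞) c := contDiff_snd.add (contDiff_const.mul (hF.comp hvsnd))
    have hGC : ContDiff ℝ (⊤ : ℕ∞) G :=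
      hH.comp (((hv.comp hcC).add (contDiff_fst.smul (hη.comp hcC))).prodMk hcC)
    -- derivative of the action via differentiation under the integral
    have h1 := param_hasDerivAt (hgC.of_le (by simp))
    have h2 := param_hasDerivAt (hGC.of_le (by simp))
    have hAct : HasDerivAt (fun s : ℝ => actionNA n α H F (fun t => v t + s • η t))
        ((1 / 2) * (∫ t in (0:ℝ)..1, fderiv ℝ g (0, t) (1, 0)) -
          ∫ t in (0:ℝ)..1, fderiv ℝ G (0, t) (1, 0)) 0 := by
      rw [hact]
      exact (h1.const_mul (1 / 2)).sub h2
    have hzero : (1 / 2) * (∫ t in (0:ℝ)..1, fderiv ℝ g (0, t) (1, 0)) -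
        (∫ t in (0:ℝ)..1, fderiv ℝ G (0, t) (1, 0)) = 0 :=
      hAct.unique (hcrit η hη hηper)
    -- pointwise identification of the kinetic derivative
    have hkin : ∀ t : ℝ, fderiv ℝ g (0, t) (1, 0) =
        (inner ℝ (Jstd n (η t)) (deriv v t) : ℝ) + inner ℝ (Jstd n (v t)) (deriv η t) := by
      intro t
      have hD : HasDerivAt (fun s => g (s, t)) (fderiv ℝ g (0, t) (1, 0)) 0 := by
        have hd := ((hgC.differentiable (by simp)) ((0:ℝ), t)).hasFDerivAt
        exact hd.comp_hasDerivAt (0:ℝ) ((hasDerivAt_id' (0:ℝ)).prodMk (hasDerivAt_const (0:ℝ) t))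
      have hpoly : (fun s => g (s, t)) = fun s =>
          (inner ℝ (Jstd n (v t)) (deriv v t) : ℝ) +
            s * ((inner ℝ (Jstd n (η t)) (deriv v t) : ℝ) + inner ℝ (Jstd n (v t)) (deriv η t)) +
            s ^ 2 * (inner ℝ (Jstd n (η t)) (deriv η t) : ℝ) := by
        funext s
        show (inner ℝ (Jstd n (v t + s • η t)) (deriv v t + s • deriv η t) : ℝ) = _
        have hJadd : Jstd n (v t + s • η t) = Jstd n (v t) + s • Jstd n (η t) := by
          rw [show ∀ y : Phase n, Jstd n y = JL n y from fun _ => rfl, map_add, _root_.map_smul]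
          rfl
        rw [hJadd, inner_add_left, inner_add_right, inner_add_right,
          real_inner_smul_left, real_inner_smul_left, real_inner_smul_right,
          real_inner_smul_right]
        ring
      rw [hpoly] at hD
      exact hD.unique (poly_hasDerivAt _ _ _)
    -- continuity helpers
    have hψc : Continuous fun t => (inner ℝ (Jstd n (deriv v t)) (η t) : ℝ) :=
      ((JL n).continuous.comp hv'C.continuous).inner hη.continuous
    have hφ'c : Continuous fun t => (inner ℝ (Jstd n (v t)) (deriv η t) : ℝ) :=
      ((JL n).continuous.comp hv.continuous).inner hη'C.continuous
    -- the kinetic integral via integration by parts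
    have hφd : ∀ t : ℝ, HasDerivAt (fun u => (inner ℝ (Jstd n (v u)) (η u) : ℝ))
        ((inner ℝ (Jstd n (v t)) (deriv η t) : ℝ) + inner ℝ (Jstd n (deriv v t)) (η t)) t := by
      intro t
      have hJv : HasDerivAt (fun u => Jstd n (v u)) (Jstd n (deriv v t)) t :=
        (JL n).hasFDerivAt.comp_hasDerivAt t (hvd t)
      exact hJv.inner ℝ (hηd t)
    have hφint : ∫ t in (0:ℝ)..1,
        ((inner ℝ (Jstd n (v t)) (deriv η t) : ℝ) + inner ℝ (Jstd n (deriv v t)) (η t)) = 0 := by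
      rw [intervalIntegral.integral_eq_sub_of_hasDerivAt (fun t _ => hφd t)
        ((hφ'c.add hψc).intervalIntegrable 0 1)]
      have hv01 : v 1 = v 0 := by simpa using hvper 0
      have hη01 : η 1 = η 0 := by simpa using hηper 0
      rw [hv01, hη01, sub_self]
    have hkinint : (1 / 2) * (∫ t in (0:ℝ)..1, fderiv ℝ g (0, t) (1, 0)) =
        - ∫ t in (0:ℝ)..1, (inner ℝ (Jstd n (deriv v t)) (η t) : ℝ) := by
      have hrw : ∀ t : ℝ, fderiv ℝ g (0, t) (1, 0) =
          (((inner ℝ (Jstd n (v t)) (deriv η t) : ℝ) + inner ℝ (Jstd n (deriv v t)) (η t))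
            - 2 * inner ℝ (Jstd n (deriv v t)) (η t)) := by
        intro t
        rw [hkin t, J_anti (η t) (deriv v t), real_inner_comm (η t) (Jstd n (deriv v t))]
        ring
      rw [intervalIntegral.integral_congr (fun t _ => hrw t),
        intervalIntegral.integral_sub
          (f := fun t => (inner ℝ (Jstd n (v t)) (deriv η t) : ℝ) + inner ℝ (Jstd n (deriv v t)) (η t))
          (g := fun t => 2 * (inner ℝ (Jstd n (deriv v t)) (η t) : ℝ)) ((hφ'c.add hψc).intervalIntegrable 0 1)
          ((continuous_const.mul hψc).intervalIntegrable 0 1),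
        hφint, intervalIntegral.integral_const_mul]
      ring
    -- pointwise identification of the Hamiltonian derivative
    have hham : ∀ t : ℝ, fderiv ℝ G (0, t) (1, 0) =
        (inner ℝ (Gx (τ t)) (η (τ t)) : ℝ) +
          (α * (inner ℝ (GF t) (η t) : ℝ)) * Kx (τ t) := by
      intro t
      have hD : HasDerivAt (fun s => G (s, t)) (fderiv ℝ G (0, t) (1, 0)) 0 := by
        have hd := ((hGC.differentiable (by simp)) ((0:ℝ), t)).hasFDerivAt
        exact hd.comp_hasDerivAt (0:ℝ) ((hasDerivAt_id' (0:ℝ)).prodMk (hasDerivAt_const (0:ℝ) t))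
      set a : ℝ := α * fderiv ℝ F (v t) (η t) with hadef
      have hlin : HasDerivAt (fun s : ℝ => v t + s • η t) (η t) 0 := by
        have := (hasDerivAt_const (0:ℝ) (v t)).add ((hasDerivAt_id (0:ℝ)).smul_const (η t))
        exact this.congr_deriv (by simp)
      have hFc : HasDerivAt (fun s : ℝ => F (v t + s • η t)) (fderiv ℝ F (v t) (η t)) 0 := by
        have := ((hF.differentiable (by simp)) (v t + (0:ℝ) • η t)).hasFDerivAt.comp_hasDerivAt
          0 hlin
        exact this.congr_deriv (by simp)
      have hcd : HasDerivAt (fun s => c (s, t)) a 0 := by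
        have := (hFc.const_mul α).const_add t
        exact this
      have hc0 : c (0, t) = τ t := by
        show t + α * F (v t + (0:ℝ) • η t) = τ t
        simp [hτdef]
      have hvc : HasDerivAt (fun s => v (c (s, t))) (a • deriv v (τ t)) 0 := by
        have hg : HasDerivAt v (deriv v (τ t)) (c (0, t)) := by rw [hc0]; exact hvd (τ t)
        exact HasDerivAt.scomp 0 hg hcd
      have hηc : HasDerivAt (fun s => η (c (s, t))) (a • deriv η (τ t)) 0 := by
        have hg : HasDerivAt η (deriv η (τ t)) (c (0, t)) := by rw [hc0]; exact hηd (τ t)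
        exact HasDerivAt.scomp 0 hg hcd
      have hsmul : HasDerivAt (fun s : ℝ => s • η (c (s, t))) (η (τ t)) 0 := by
        have := (hasDerivAt_id (0:ℝ)).smul hηc
        simp only [hc0] at this
        exact this.congr_deriv (by simp)
      have hfirst : HasDerivAt (fun s => v (c (s, t)) + s • η (c (s, t)))
          (a • deriv v (τ t) + η (τ t)) 0 := hvc.add hsmul
      have hpair : HasDerivAt (fun s => ((v (c (s, t)) + s • η (c (s, t)), c (s, t)) :
          Phase n × ℝ)) ((a • deriv v (τ t) + η (τ t), a) : Phase n × ℝ) 0 := hfirst.prodMk hcd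
      have hHc : HasDerivAt (fun s => G (s, t))
          (fderiv ℝ H (v (τ t), τ t) ((a • deriv v (τ t) + η (τ t), a) : Phase n × ℝ)) 0 := by
        have hbase : ((v (c (0, t)) + (0:ℝ) • η (c (0, t)), c (0, t)) : Phase n × ℝ) =
            (v (τ t), τ t) := by
          rw [hc0]
          simp
        have hcomp := ((hHdiff ((v (c (0, t)) + (0:ℝ) • η (c (0, t)),
          c (0, t)))).hasFDerivAt).comp_hasDerivAt 0 hpair
        rw [hbase] at hcomp
        exact hcomp
      have huniq := hD.unique hHc
      rw [huniq]
      have hsplit : ((a • deriv v (τ t) + η (τ t), a) : Phase n × ℝ) =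
          ((η (τ t), 0) : Phase n × ℝ) +
            a • (((deriv v (τ t), 0) : Phase n × ℝ) + ((0 : Phase n), (1:ℝ))) := by
        apply Prod.ext
        · show a • deriv v (τ t) + η (τ t) = η (τ t) + a • (deriv v (τ t) + 0)
          rw [add_zero]
          abel
        · show a = 0 + a * (0 + 1)
          ring
      rw [hsplit, map_add, _root_.map_smul, map_add]
      rw [show ((η (τ t), (0:ℝ)) : Phase n × ℝ) =
        ((ContinuousLinearMap.inl ℝ (Phase n) ℝ) (η (τ t))) from rfl]
      rw [show ((deriv v (τ t), (0:ℝ)) : Phase n × ℝ) =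
        ((ContinuousLinearMap.inl ℝ (Phase n) ℝ) (deriv v (τ t))) from rfl]
      have e1 : fderiv ℝ H (v (τ t), τ t) ((ContinuousLinearMap.inl ℝ (Phase n) ℝ) (η (τ t)))
          = (inner ℝ (Gx (τ t)) (η (τ t)) : ℝ) := (hpairx (v (τ t)) (τ t) (η (τ t))).symm
      have e2 : fderiv ℝ H (v (τ t), τ t)
            ((ContinuousLinearMap.inl ℝ (Phase n) ℝ) (deriv v (τ t)))
          = (inner ℝ (Gx (τ t)) (deriv v (τ t)) : ℝ) :=
        (hpairx (v (τ t)) (τ t) (deriv v (τ t))).symm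
      have e3 : fderiv ℝ H (v (τ t), τ t) (((0 : Phase n), (1:ℝ)) : Phase n × ℝ) = pt (τ t) :=
        (hderivt (v (τ t)) (τ t)).symm
      rw [e1, e2, e3]
      have e4 : a = α * (inner ℝ (GF t) (η t) : ℝ) := by rw [hadef, hpairF]
      rw [e4]
      rw [smul_eq_mul]
    -- change of variables in the Hamiltonian integral
    have hPc : Continuous fun u => (inner ℝ (Gx u) (η u) : ℝ) :=
      hGxC.continuous.inner hη.continuous
    set Q : ℝ → ℝ := fun u => deriv σ u * (inner ℝ (Gx u) (η u) : ℝ) with hQdef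
    have hQc : Continuous Q := hσ'C.continuous.mul hPc
    have hQper : Function.Periodic Q 1 := by
      intro u
      simp only [hQdef, hσ'per u, hGxper u, hηper u]
    have hchg : ∫ t in (0:ℝ)..1, (inner ℝ (Gx (τ t)) (η (τ t)) : ℝ) = ∫ u in (0:ℝ)..1, Q u := by
      have hsm : (∫ t in (0:ℝ)..1, ρ t • Q (τ t)) = ∫ u in (τ 0)..(τ 1), Q u :=
        intervalIntegral.integral_comp_smul_deriv (fun t _ => hτd t)
          hρC.continuous.continuousOn hQc
      have h3 : ∀ t : ℝ, (inner ℝ (Gx (τ t)) (η (τ t)) : ℝ) = ρ t • Q (τ t) := by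
        intro t
        show _ = ρ t * (deriv σ (τ t) * _)
        rw [← mul_assoc, mul_comm (ρ t) (deriv σ (τ t)), hinv t, one_mul]
      rw [intervalIntegral.integral_congr (g := fun t => ρ t • Q (τ t)) (fun t _ => h3 t), hsm]
      have hτ1 : τ 1 = τ 0 + 1 := by
        have := hτper 0
        rw [zero_add] at this
        exact this
      rw [hτ1]
      have := hQper.intervalIntegral_add_eq (τ 0) 0
      rw [this, zero_add]
    -- assemble the Hamiltonian integral
    have hGFη : Continuous fun t => (inner ℝ (GF t) (η t) : ℝ) :=
      hGFC.continuous.inner hη.continuous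
    have hc2c : Continuous fun t => (α * Kx (τ t)) * (inner ℝ (GF t) (η t) : ℝ) :=
      (continuous_const.mul (hKxC.continuous.comp hτC.continuous)).mul hGFη
    have hGxτc : Continuous fun t => (inner ℝ (Gx (τ t)) (η (τ t)) : ℝ) :=
      (hGxC.continuous.comp hτC.continuous).inner (hη.continuous.comp hτC.continuous)
    have hhamint : ∫ t in (0:ℝ)..1, fderiv ℝ G (0, t) (1, 0) =
        (∫ t in (0:ℝ)..1, Q t) +
          ∫ t in (0:ℝ)..1, (α * Kx (τ t)) * (inner ℝ (GF t) (η t) : ℝ) := by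
      have hptw : ∀ t : ℝ, fderiv ℝ G (0, t) (1, 0) =
          (inner ℝ (Gx (τ t)) (η (τ t)) : ℝ) + (α * Kx (τ t)) * (inner ℝ (GF t) (η t) : ℝ) := by
        intro t
        rw [hham t]
        ring
      rw [intervalIntegral.integral_congr (fun t _ => hptw t),
        intervalIntegral.integral_add (hGxτc.intervalIntegrable 0 1)
          (hc2c.intervalIntegrable 0 1), hchg]
    -- final assembly
    have hWexp : ∀ t : ℝ, (inner ℝ (W t) (η t) : ℝ) =
        (inner ℝ (Jstd n (deriv v t)) (η t) : ℝ) + Q t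
          + (α * Kx (τ t)) * (inner ℝ (GF t) (η t) : ℝ) := by
      intro t
      show (inner ℝ (Jstd n (deriv v t) + deriv σ t • Gx t + (α * Kx (τ t)) • GF t) (η t) : ℝ) = _
      rw [inner_add_left, inner_add_left, real_inner_smul_left, real_inner_smul_left]
    rw [intervalIntegral.integral_congr (fun t _ => hWexp t),
      intervalIntegral.integral_add
        (f := fun t => (inner ℝ (Jstd n (deriv v t)) (η t) : ℝ) + Q t)
        (g := fun t => (α * Kx (τ t)) * (inner ℝ (GF t) (η t) : ℝ)) ((hψc.add hQc).intervalIntegrable 0 1)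
        (hc2c.intervalIntegrable 0 1),
      intervalIntegral.integral_add (hψc.intervalIntegrable 0 1) (hQc.intervalIntegrable 0 1)]
    rw [hkinint, hhamint] at hzero
    linarith
  -- conclude `W = 0`
  have hW0 : ∀ t, W t = 0 := by
    have hWcont : Continuous W := hWC.continuous
    have hWped : Function.Periodic W 1 := fun t => hWper t
    have hicc : ∀ t ∈ Icc (0:ℝ) 1, W t = 0 := by
      intro t ht
      have h0 := hvar W hWC hWper
      have hz := eq_zero_of_integral_nonneg (fun t => (inner ℝ (W t) (W t) : ℝ))
        (hWcont.inner hWcont) (fun t => real_inner_self_nonneg) h0 t ht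
      exact inner_self_eq_zero.mp hz
    intro t
    have hfr : W t = W (Int.fract t) := by
      have := hWped.sub_int_mul_eq (x := t) ⌊t⌋
      rw [mul_one] at this
      rw [Int.self_sub_floor] at this
      exact this.symm
    rw [hfr]
    exact hicc _ ⟨Int.fract_nonneg t, (Int.fract_lt_one t).le⟩
  -- final pointwise algebra
  intro t
  show deriv v t = deriv σ t • Jstd n (Gx t) + (α * Kx (τ t)) • Jstd n (GF t)
  have h := hW0 t
  have hJ : Jstd n (deriv v t) = -(deriv σ t • Gx t + (α * Kx (τ t)) • GF t) := by
    have h' : Jstd n (deriv v t) + (deriv σ t • Gx t + (α * Kx (τ t)) • GF t) = 0 := by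
      rw [← add_assoc]
      exact h
    exact eq_neg_of_add_eq_zero_left h'
  have happly := congrArg (Jstd n) hJ
  rw [J_J] at happly
  have hexp : Jstd n (-(deriv σ t • Gx t + (α * Kx (τ t)) • GF t)) =
      -(deriv σ t • Jstd n (Gx t) + (α * Kx (τ t)) • Jstd n (GF t)) := by
    rw [show ∀ y : Phase n, Jstd n y = JL n y from fun _ => rfl]
    rw [map_neg, map_add, _root_.map_smul, _root_.map_smul]
    rfl
  rw [hexp] at happly
  have := neg_injective happly
  exact this
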